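/- Let {b_n}_{n≥1} be a nonnegative real sequence with lim_{n→∞} n·b_n = 0, for which there exist a natural number N₀ and a constant M > 0 such that for every m ≥ 1, ∑_{n=m}^{2m} |b_n − b_{n+1}| ≤ M · max_{m ≤ n < m+N₀} b_n. Then the sine series ∑_{n=1}^{∞} b_n sin(nx) converges uniformly on ℝ. -/

import Mathlib

open Filter Finset Real

-- Dirichlet kernel bound
lemma sin_sum_bound (x : ℝ) (hx : 0 < x) (hx' : x ≤ π) (a c : ℕ) :
    |∑ k ∈ Finset.Icc a c, Real.sin (k * x)| ≤ π / x := by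
  have hpix : 0 < π / x := div_pos pi_pos hx
  rcases le_or_gt a c with hac | hac
  · have hs : 0 < Real.sin (x / 2) :=
      Real.sin_pos_of_pos_of_lt_pi (by linarith) (by linarith [pi_pos])
    have jordan : x / π ≤ Real.sin (x / 2) := by
      simpa using Real.mul_le_sin (x := x / 2) (by positivity) (by linarith)
    have key : ∀ c, a ≤ c → ∑ k ∈ Finset.Icc a c, (2 * Real.sin (x/2) * Real.sin (k * x))
        = Real.cos (a * x - x/2) - Real.cos (c * x + x/2) := by
      intro c hc
      induction c, hc using Nat.le_induction with
      | base =>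
        rw [Finset.Icc_self, Finset.sum_singleton, Real.cos_sub_cos]
        ring_nf
        rw [show x * (-1/2) = -(x * (1/2)) by ring, Real.sin_neg]
        ring
      | succ c hc ih =>
        rw [Finset.sum_Icc_succ_top (by omega), ih]
        have h1 : Real.cos (↑c * x + x / 2) - Real.cos (↑(c+1) * x + x / 2)
            = 2 * Real.sin (x/2) * Real.sin (↑(c+1) * x) := by
          rw [Real.cos_sub_cos]
          push_cast
          rw [show (↑c * x + x / 2 + ((↑c + 1) * x + x / 2)) / 2 = (↑c+1) * x by ring,
              show (↑c * x + x / 2 - ((↑c + 1) * x + x / 2)) / 2 = -(x/2) by ring,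
              Real.sin_neg]
          ring
        push_cast at h1 ⊢
        linarith
    have h2 := key c hac
    rw [← Finset.mul_sum] at h2
    have habs : |2 * Real.sin (x/2) * ∑ k ∈ Finset.Icc a c, Real.sin (k * x)| ≤ 2 := by
      rw [h2]
      calc |Real.cos (a * x - x/2) - Real.cos (c * x + x/2)|
          ≤ |Real.cos (a * x - x/2)| + |Real.cos (c * x + x/2)| := abs_sub _ _
        _ ≤ 1 + 1 := add_le_add (Real.abs_cos_le_one _) (Real.abs_cos_le_one _)
        _ = 2 := by norm_num
    rw [abs_mul, abs_of_pos (by linarith : (0:ℝ) < 2 * Real.sin (x/2))] at habs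
    have hxπ : 0 < x / π := div_pos hx pi_pos
    calc |∑ k ∈ Finset.Icc a c, Real.sin (k * x)|
        ≤ 2 / (2 * Real.sin (x/2)) := by
          rw [le_div_iff₀ (by linarith)]
          linarith [habs, mul_comm (2 * Real.sin (x/2)) |∑ k ∈ Finset.Icc a c, Real.sin (k * x)|]
      _ = 1 / Real.sin (x/2) := by field_simp
      _ ≤ 1 / (x / π) := by
          apply one_div_le_one_div_of_le hxπ jordan
      _ = π / x := by field_simp
  · rw [Finset.Icc_eq_empty (by omega)]
    simpa using hpix.le

lemma abel_bound (b : ℕ → ℝ) (hb : ∀ n, 0 ≤ b n) (x : ℝ) (hx : 0 < x) (hx' : x ≤ π)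
    (a c : ℕ) :
    |∑ k ∈ Finset.Icc a c, b k * Real.sin (k * x)| ≤
      (∑ k ∈ Finset.Ico a c, |b k - b (k + 1)| + b c) * (π / x) := by
  set S : ℕ → ℝ := fun k => ∑ j ∈ Finset.Icc a k, Real.sin (j * x) with hS
  have hpix : 0 < π / x := div_pos pi_pos hx
  rcases le_or_gt a c with hac | hac
  · have key : ∀ c, a ≤ c → ∑ k ∈ Finset.Icc a c, b k * Real.sin (k * x)
        = ∑ k ∈ Finset.Ico a c, (b k - b (k + 1)) * S k + b c * S c := by
      intro c hc
      induction c, hc using Nat.le_induction with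
      | base => simp [hS]
      | succ c hc ih =>
        rw [Finset.sum_Icc_succ_top (by omega), ih,
            Finset.sum_Ico_succ_top (by omega)]
        have hSsucc : S (c + 1) = S c + Real.sin ((c + 1 : ℕ) * x) :=
          Finset.sum_Icc_succ_top (by omega) _
        rw [hSsucc]
        push_cast
        ring
    rw [key c hac]
    have hSb : ∀ k, |S k| ≤ π / x := fun k => sin_sum_bound x hx hx' a k
    calc |∑ k ∈ Finset.Ico a c, (b k - b (k + 1)) * S k + b c * S c|
        ≤ |∑ k ∈ Finset.Ico a c, (b k - b (k + 1)) * S k| + |b c * S c| := abs_add_le _ _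
      _ ≤ (∑ k ∈ Finset.Ico a c, |b k - b (k + 1)|) * (π / x) + b c * (π / x) := by
          gcongr ?_ + ?_
          · calc |∑ k ∈ Finset.Ico a c, (b k - b (k + 1)) * S k|
                ≤ ∑ k ∈ Finset.Ico a c, |(b k - b (k + 1)) * S k| :=
                  Finset.abs_sum_le_sum_abs _ _
              _ ≤ ∑ k ∈ Finset.Ico a c, |b k - b (k + 1)| * (π / x) := by
                  apply Finset.sum_le_sum
                  intro k _
                  rw [abs_mul]
                  exact mul_le_mul_of_nonneg_left (hSb k) (abs_nonneg _)
              _ = (∑ k ∈ Finset.Ico a c, |b k - b (k + 1)|) * (π / x) := by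
                  rw [Finset.sum_mul]
          · rw [abs_mul, abs_of_nonneg (hb c)]
            exact mul_le_mul_of_nonneg_left (hSb c) (hb c)
      _ = (∑ k ∈ Finset.Ico a c, |b k - b (k + 1)| + b c) * (π / x) := by ring
  · rw [Finset.Icc_eq_empty (by omega), Finset.Ico_eq_empty (by omega)]
    simp only [Finset.sum_empty, abs_zero, zero_add]
    exact mul_nonneg (hb c) hpix.le

lemma tail_var (b : ℕ → ℝ) (hb : ∀ n, 0 ≤ b n) (N₀ : ℕ) (hN₀ : 0 < N₀) (M : ℝ) (hM : 0 < M)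
    (h2 : ∀ m : ℕ, 1 ≤ m →
      ∑ n ∈ Finset.Icc m (2 * m), |b n - b (n + 1)| ≤
        M * (Finset.Ico m (m + N₀)).sup' (Finset.nonempty_Ico.mpr (Nat.lt_add_of_pos_right hN₀)) b)
    (δ : ℝ) (hδ : 0 < δ) (m₀ : ℕ)
    (hsm : ∀ n : ℕ, m₀ ≤ n → (n : ℝ) * b n ≤ δ) :
    ∀ d m : ℕ, 1 ≤ m → m₀ ≤ m →
      ∑ n ∈ Finset.Icc m (m + d), |b n - b (n + 1)| ≤ 2 * M * δ / m := by
  intro d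
  induction d using Nat.strong_induction_on with
  | _ d ih =>
    intro m hm1 hm0
    have hmpos : (0:ℝ) < (m:ℝ) := by exact_mod_cast hm1
    have hsup : (Finset.Ico m (m + N₀)).sup' (Finset.nonempty_Ico.mpr (by omega)) b ≤ δ / m := by
      apply Finset.sup'_le
      intro n hn
      simp only [Finset.mem_Ico] at hn
      have hnm : m ≤ n := hn.1
      have hnpos : (0:ℝ) < (n:ℝ) := by
        have : 1 ≤ n := le_trans hm1 hnm
        exact_mod_cast this
      have h1 : b n ≤ δ / n := by
        rw [le_div_iff₀ hnpos]
        linarith [hsm n (le_trans hm0 hnm)]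
      have h2 : δ / n ≤ δ / m := by
        apply div_le_div_of_nonneg_left hδ.le hmpos
        exact_mod_cast hnm
      linarith
    have hblock : ∑ n ∈ Finset.Icc m (2 * m), |b n - b (n + 1)| ≤ M * (δ / m) :=
      le_trans (h2 m hm1) (mul_le_mul_of_nonneg_left hsup hM.le)
    rcases le_or_gt (m + d) (2 * m) with hcase | hcase
    · calc ∑ n ∈ Finset.Icc m (m + d), |b n - b (n + 1)|
          ≤ ∑ n ∈ Finset.Icc m (2 * m), |b n - b (n + 1)| := by
            apply Finset.sum_le_sum_of_subset_of_nonneg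
            · exact Finset.Icc_subset_Icc_right hcase
            · intro i _ _; exact abs_nonneg _
        _ ≤ M * (δ / m) := hblock
        _ ≤ 2 * M * δ / m := by
            rw [mul_div_assoc]
            nlinarith [div_pos hδ hmpos]
    · -- split Icc m (m+d) = Ico m (2m+1) ∪ Ico (2m+1) (m+d+1)
      have hsplit : ∑ n ∈ Finset.Icc m (m + d), |b n - b (n + 1)|
          = ∑ n ∈ Finset.Icc m (2 * m), |b n - b (n + 1)|
            + ∑ n ∈ Finset.Icc (2 * m + 1) (m + d), |b n - b (n + 1)| := by
        rw [← Finset.Ico_add_one_right_eq_Icc, ← Finset.Ico_add_one_right_eq_Icc, ← Finset.Ico_add_one_right_eq_Icc]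
        rw [← Finset.sum_Ico_consecutive _ (by omega : m ≤ 2 * m + 1)
              (by omega : 2 * m + 1 ≤ m + d + 1)]
      have hd' : d - m - 1 < d := by omega
      have heq : 2 * m + 1 + (d - m - 1) = m + d := by omega
      have htail := ih (d - m - 1) hd' (2 * m + 1) (by omega) (by omega)
      rw [heq] at htail
      have h2m1 : (0:ℝ) < (2 * m + 1 : ℕ) := by positivity
      have htail' : ∑ n ∈ Finset.Icc (2 * m + 1) (m + d), |b n - b (n + 1)| ≤ M * δ / m := by
        refine le_trans htail ?_
        rw [div_le_div_iff₀ h2m1 hmpos]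
        have : ((2 * m + 1 : ℕ) : ℝ) = 2 * (m:ℝ) + 1 := by push_cast; ring
        rw [this]
        nlinarith [mul_pos hM hδ]
      rw [hsplit]
      calc ∑ n ∈ Finset.Icc m (2 * m), |b n - b (n + 1)|
            + ∑ n ∈ Finset.Icc (2 * m + 1) (m + d), |b n - b (n + 1)|
          ≤ M * (δ / m) + M * δ / m := add_le_add hblock htail'
        _ = 2 * M * δ / m := by field_simp; ring

lemma block_bound (b : ℕ → ℝ) (hb : ∀ n, 0 ≤ b n) (M : ℝ) (hM : 0 < M)
    (δ : ℝ) (hδ : 0 < δ) (m₀ : ℕ)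
    (hsm : ∀ n : ℕ, m₀ ≤ n → (n : ℝ) * b n ≤ δ)
    (hvar : ∀ d m : ℕ, 1 ≤ m → m₀ ≤ m →
      ∑ n ∈ Finset.Icc m (m + d), |b n - b (n + 1)| ≤ 2 * M * δ / m)
    (p q : ℕ) (hp1 : 1 ≤ p) (hp0 : m₀ ≤ p) (hpq : p ≤ q)
    (x : ℝ) (hx : 0 < x) (hx' : x ≤ π) :
    |∑ k ∈ Finset.Ioc p q, b k * Real.sin (k * x)| ≤ (1 + (2 * M + 1) * π) * δ := by
  set N : ℕ := ⌊1 / x⌋₊ with hN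
  set s : ℕ := min q (max p N) with hs
  have hps : p ≤ s := le_min hpq (le_max_left _ _)
  have hsq : s ≤ q := min_le_left _ _
  have hsplit : ∑ k ∈ Finset.Ioc p s, b k * Real.sin (k * x)
      + ∑ k ∈ Finset.Ioc s q, b k * Real.sin (k * x)
      = ∑ k ∈ Finset.Ioc p q, b k * Real.sin (k * x) :=
    Finset.sum_Ioc_consecutive _ hps hsq
  -- Part 1
  have hNx : (N : ℝ) * x ≤ 1 := by
    rw [← le_div_iff₀ hx]
    exact Nat.floor_le (by positivity)
  have part1 : |∑ k ∈ Finset.Ioc p s, b k * Real.sin (k * x)| ≤ δ := by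
    calc |∑ k ∈ Finset.Ioc p s, b k * Real.sin (k * x)|
        ≤ ∑ k ∈ Finset.Ioc p s, |b k * Real.sin (k * x)| := Finset.abs_sum_le_sum_abs _ _
      _ ≤ ∑ k ∈ Finset.Ioc p s, δ * x := by
          apply Finset.sum_le_sum
          intro k hk
          simp only [Finset.mem_Ioc] at hk
          have hkpos : (0:ℝ) ≤ (k:ℝ) := Nat.cast_nonneg _
          have h1 : |Real.sin ((k:ℝ) * x)| ≤ (k:ℝ) * x := by
            refine le_trans Real.abs_sin_le_abs ?_
            rw [abs_of_nonneg (by positivity)]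
          rw [abs_mul, abs_of_nonneg (hb k)]
          calc b k * |Real.sin ((k:ℝ) * x)| ≤ b k * ((k:ℝ) * x) :=
                mul_le_mul_of_nonneg_left h1 (hb k)
            _ = ((k:ℝ) * b k) * x := by ring
            _ ≤ δ * x := by
                apply mul_le_mul_of_nonneg_right _ hx.le
                exact hsm k (le_trans hp0 (le_of_lt hk.1))
      _ = ((s - p : ℕ) : ℝ) * (δ * x) := by rw [Finset.sum_const, Nat.card_Ioc]; simp
      _ ≤ (N : ℝ) * (δ * x) := by
          apply mul_le_mul_of_nonneg_right _ (by positivity)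
          have : s - p ≤ N := by omega
          exact_mod_cast this
      _ = ((N:ℝ) * x) * δ := by ring
      _ ≤ 1 * δ := mul_le_mul_of_nonneg_right hNx hδ.le
      _ = δ := one_mul δ
  -- Part 2
  have part2 : |∑ k ∈ Finset.Ioc s q, b k * Real.sin (k * x)| ≤ (2 * M + 1) * π * δ := by
    rcases eq_or_lt_of_le hsq with heq | hlt
    · rw [heq, Finset.Ioc_self, Finset.sum_empty, abs_zero]
      positivity
    · -- s < q, hence s = max p N, so N ≤ s
      have hsmax : s = max p N := by omega
      have hNs : N ≤ s := by omega
      have hIoc : Finset.Ioc s q = Finset.Icc (s + 1) q := by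
        rw [← Finset.Icc_add_one_left_eq_Ioc]
      have hs1pos : (0:ℝ) < ((s:ℝ) + 1) := by positivity
      -- π / x ≤ π * (s + 1)
      have hpx : π / x ≤ π * ((s:ℝ) + 1) := by
        have h1 : 1 / x < (N:ℝ) + 1 := Nat.lt_floor_add_one _
        have h2 : (N:ℝ) + 1 ≤ (s:ℝ) + 1 := by
          have h3 : (N:ℝ) ≤ (s:ℝ) := by exact_mod_cast hNs
          linarith
        calc π / x = π * (1 / x) := by ring
          _ ≤ π * ((N:ℝ) + 1) := by
              apply mul_le_mul_of_nonneg_left _ pi_pos.le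
              linarith
          _ ≤ π * ((s:ℝ) + 1) := by
              apply mul_le_mul_of_nonneg_left h2 pi_pos.le
      -- variation bound
      have hvar2 : ∑ k ∈ Finset.Ico (s + 1) q, |b k - b (k + 1)| ≤ 2 * M * δ / ((s:ℝ) + 1) := by
        have hsub : Finset.Ico (s + 1) q ⊆ Finset.Icc (s + 1) ((s + 1) + q) := by
          intro i hi
          simp only [Finset.mem_Ico, Finset.mem_Icc] at *
          omega
        have h0 := hvar q (s + 1) (by omega) (by omega)
        have hcast : (((s + 1 : ℕ)) : ℝ) = (s:ℝ) + 1 := by push_cast; ring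
        rw [hcast] at h0
        exact le_trans (Finset.sum_le_sum_of_subset_of_nonneg hsub
          (fun i _ _ => abs_nonneg _)) h0
      -- bound on b q
      have hbq : b q ≤ δ / ((s:ℝ) + 1) := by
        have hqpos : (0:ℝ) < (q:ℝ) := by
          have : 1 ≤ q := by omega
          exact_mod_cast this
        have h1 : b q ≤ δ / (q:ℝ) := by
          rw [le_div_iff₀ hqpos]
          linarith [hsm q (by omega)]
        have h2 : δ / (q:ℝ) ≤ δ / ((s:ℝ) + 1) := by
          apply div_le_div_of_nonneg_left hδ.le hs1pos
          have : s + 1 ≤ q := by omega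
          exact_mod_cast this
        linarith
      rw [hIoc]
      have habel := abel_bound b hb x hx hx' (s + 1) q
      refine le_trans habel ?_
      have hsum_nonneg : (0:ℝ) ≤ ∑ k ∈ Finset.Ico (s + 1) q, |b k - b (k + 1)| :=
        Finset.sum_nonneg fun i _ => abs_nonneg _
      calc (∑ k ∈ Finset.Ico (s + 1) q, |b k - b (k + 1)| + b q) * (π / x)
          ≤ (2 * M * δ / ((s:ℝ) + 1) + δ / ((s:ℝ) + 1)) * (π * ((s:ℝ) + 1)) := by
            apply mul_le_mul (add_le_add hvar2 hbq) hpx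
              (le_of_lt (div_pos pi_pos hx))
              (by positivity)
        _ = (2 * M + 1) * π * δ := by field_simp
  calc |∑ k ∈ Finset.Ioc p q, b k * Real.sin (k * x)|
      ≤ |∑ k ∈ Finset.Ioc p s, b k * Real.sin (k * x)|
        + |∑ k ∈ Finset.Ioc s q, b k * Real.sin (k * x)| := by
        rw [← hsplit]; exact abs_add_le _ _
    _ ≤ δ + (2 * M + 1) * π * δ := add_le_add part1 part2
    _ = (1 + (2 * M + 1) * π) * δ := by ring

lemma sin_reduce (x : ℝ) : ∃ y : ℝ, 0 ≤ y ∧ y ≤ π ∧ ∃ s : ℝ, |s| = 1 ∧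
    ∀ k : ℕ, Real.sin (k * x) = s * Real.sin (k * y) := by
  have h2π : (0:ℝ) < 2 * π := by positivity
  set n : ℤ := ⌊x / (2 * π)⌋ with hn
  set t : ℝ := x - n * (2 * π) with ht
  have ht0 : 0 ≤ t := by
    have h1 : ((n:ℝ)) ≤ x / (2 * π) := Int.floor_le _
    have h2 : (n:ℝ) * (2 * π) ≤ x := (le_div_iff₀ h2π).mp h1
    rw [ht]; linarith
  have ht2 : t < 2 * π := by
    have h1 : x / (2 * π) < (n:ℝ) + 1 := Int.lt_floor_add_one _
    have h2 : x < ((n:ℝ) + 1) * (2 * π) := (div_lt_iff₀ h2π).mp h1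
    rw [ht]; linarith
  have hsin : ∀ k : ℕ, Real.sin (k * x) = Real.sin (k * t) := by
    intro k
    have : (k:ℝ) * x = (k:ℝ) * t + ((k : ℤ) * n : ℤ) * (2 * π) := by
      push_cast
      rw [ht]
      ring
    rw [this, Real.sin_add_int_mul_two_pi]
  rcases le_or_gt t π with hcase | hcase
  · exact ⟨t, ht0, hcase, 1, abs_one, fun k => by rw [hsin k, one_mul]⟩
  · refine ⟨2 * π - t, by linarith, by linarith, -1, by norm_num, fun k => ?_⟩
    rw [hsin k]
    have : (k:ℝ) * t = -((k:ℝ) * (2 * π - t)) + ((k : ℤ) : ℝ) * (2 * π) := by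
      push_cast; ring
    rw [this, Real.sin_add_int_mul_two_pi, Real.sin_neg]
    ring

/-- Sufficiency direction of Theorem 2 of the paper: if a nonnegative sequence
`b` satisfies condition (2*) and `n·bₙ → 0`, then the sine series
`∑ bₙ sin(nx)` converges uniformly on ℝ. -/
theorem theorem2_sufficiency (b : ℕ → ℝ) (hb : ∀ n : ℕ, 0 ≤ b n)
    (hnb : Tendsto (fun n : ℕ => (n : ℝ) * b n) atTop (nhds 0))
    (h2star : ∃ N₀ : ℕ, ∃ hN₀ : 0 < N₀, ∃ M : ℝ, 0 < M ∧ ∀ m : ℕ, 1 ≤ m →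
      ∑ n ∈ Finset.Icc m (2 * m), |b n - b (n + 1)| ≤
        M * (Finset.Ico m (m + N₀)).sup' (Finset.nonempty_Ico.mpr (by omega)) b) :
    ∃ f : ℝ → ℝ, TendstoUniformly
      (fun (n : ℕ) (x : ℝ) => ∑ k ∈ Finset.Icc 1 n, b k * Real.sin (k * x)) f atTop := by
  obtain ⟨N₀, hN₀, M, hM, h2⟩ := h2star
  set F : ℕ → ℝ → ℝ := fun n x => ∑ k ∈ Finset.Icc 1 n, b k * Real.sin (k * x) with hF
  have hUC : UniformCauchySeqOn F atTop Set.univ := by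
    rw [Metric.uniformCauchySeqOn_iff]
    intro ε hε
    have hCpos : (0:ℝ) < 1 + (2 * M + 1) * π := by positivity
    set δ : ℝ := ε / (2 * (1 + (2 * M + 1) * π)) with hδdef
    have hδ : 0 < δ := by positivity
    obtain ⟨m₀, hm₀⟩ := Metric.tendsto_atTop.mp hnb δ hδ
    have hsm : ∀ n : ℕ, m₀ ≤ n → (n : ℝ) * b n ≤ δ := by
      intro n hn
      have := hm₀ n hn
      rw [Real.dist_eq, sub_zero] at this
      exact le_of_lt (lt_of_abs_lt this)
    have hvar := tail_var b hb N₀ hN₀ M hM h2 δ hδ m₀ hsm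
    refine ⟨max 1 m₀, ?_⟩
    -- the core estimate for p ≤ q
    have key : ∀ p q : ℕ, max 1 m₀ ≤ p → p ≤ q → ∀ x : ℝ,
        dist (F p x) (F q x) < ε := by
      intro p q hp hpq x
      have hdiff : F q x - F p x = ∑ k ∈ Finset.Ioc p q, b k * Real.sin (k * x) := by
        have e1 : ∀ j : ℕ, F j x = ∑ k ∈ Finset.Ioc 0 j, b k * Real.sin (k * x) := by
          intro j
          rw [hF]
          simp only
          rw [← Finset.Icc_add_one_left_eq_Ioc, zero_add]
        rw [e1, e1, ← Finset.sum_Ioc_consecutive _ (Nat.zero_le p) hpq]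
        ring
      obtain ⟨y, hy0, hyπ, s, hs1, hsy⟩ := sin_reduce x
      have hsum : ∑ k ∈ Finset.Ioc p q, b k * Real.sin (k * x)
          = s * ∑ k ∈ Finset.Ioc p q, b k * Real.sin (k * y) := by
        rw [Finset.mul_sum]
        apply Finset.sum_congr rfl
        intro k _
        rw [hsy k]
        ring
      have hbound : |∑ k ∈ Finset.Ioc p q, b k * Real.sin (k * y)| ≤ ε / 2 := by
        rcases eq_or_lt_of_le hy0 with hy | hy
        · have : ∀ k ∈ Finset.Ioc p q, b k * Real.sin (k * y) = 0 := by
            intro k _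
            rw [← hy, mul_zero, Real.sin_zero, mul_zero]
          rw [Finset.sum_eq_zero this, abs_zero]
          positivity
        · have := block_bound b hb M hM δ hδ m₀ hsm hvar p q
            (le_trans (le_max_left _ _) hp) (le_trans (le_max_right _ _) hp) hpq y hy hyπ
          refine le_trans this ?_
          have heq : (1 + (2 * M + 1) * π) * δ = ε / 2 := by
            rw [hδdef]
            field_simp
          rw [heq]
      rw [dist_comm, Real.dist_eq, hdiff, hsum, abs_mul, hs1, one_mul]
      calc |∑ k ∈ Finset.Ioc p q, b k * Real.sin (k * y)| ≤ ε / 2 := hbound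
        _ < ε := by linarith
    intro m hm n hn x _
    rcases le_total m n with h | h
    · exact key m n hm h x
    · rw [dist_comm]
      exact key n m hn h x
  have hfx : ∀ x : ℝ, ∃ l : ℝ, Tendsto (fun n => F n x) atTop (nhds l) := fun x =>
    cauchySeq_tendsto_of_complete (hUC.cauchySeq (Set.mem_univ x))
  choose f hf using hfx
  exact ⟨f, tendstoUniformlyOn_univ.mp (hUC.tendstoUniformlyOn_of_tendsto (fun x _ => hf x))⟩
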